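/- arXiv:1408.2111 — 2 statements merged into one kernel-verified Lean document; each statement's English description precedes it below -/
import Mathlib

section
/- Let K be a degree-3 number field, and let ω₁, ω₂ ∈ O_K be nonzero and linearly independent over ℚ; let 𝔡 be the ideal of O_K generated by ω₁ and ω₂. Let q ≥ 1 and a₁, a₂ be integers, k ≥ 1, and let 𝔭 be a prime ideal of O_K lying above a rational prime p, unramified over p, with N(𝔭) = p, and assume p ∤ q·N_{K/ℚ}(ω₁ω₂). For integers g₁, g₂ define S(g₁,g₂;𝔭^k) := Σ over integers 1 ≤ n₁, n₂ ≤ p^k such that 𝔭^k·𝔡 divides the principal ideal ((a₁+n₁q)ω₁ + (a₂+n₂q)ω₂)O_K, of e((g₁n₁ + g₂n₂)/p^k). Then: if 𝔭^k divides the principal ideal (g₂ω₁ − g₁ω₂)O_K, one has S(g₁,g₂;𝔭^k) = p^k · e(−(a₁g₁ + a₂g₂)·q̄ / p^k), where q̄ is the inverse of q modulo p^k; otherwise S(g₁,g₂;𝔭^k) = 0. -/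
open scoped BigOperators
open NumberField

noncomputable section

/-- `e(t) = exp(2πit)`. -/
def eC (t : ℝ) : ℂ := Complex.exp (2 * Real.pi * Complex.I * t)

/-- The exponential sum `S(g₁, g₂; 𝔭^k)`: the sum of `e((g₁n₁ + g₂n₂)/p^k)` over the pairs
`1 ≤ n₁, n₂ ≤ p^k` such that `𝔭^k · 𝔡` divides the principal ideal generated by
`(a₁+n₁q)ω₁ + (a₂+n₂q)ω₂`, where `𝔡` is the ideal generated by `ω₁, ω₂`. -/
def expSumS {K : Type} [Field K] [NumberField K] (ω₁ ω₂ : 𝓞 K)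
    (a₁ a₂ q g₁ g₂ : ℤ) (p k : ℕ) (𝔭 : Ideal (𝓞 K)) : ℂ :=
  ∑ᶠ (n : ℤ × ℤ) (_ : 1 ≤ n.1 ∧ n.1 ≤ (p : ℤ) ^ k ∧ 1 ≤ n.2 ∧ n.2 ≤ (p : ℤ) ^ k ∧
      (a₁ + n.1 * q) • ω₁ + (a₂ + n.2 * q) • ω₂ ∈ 𝔭 ^ k * Ideal.span {ω₁, ω₂}),
    eC (((g₁ * n.1 + g₂ * n.2 : ℤ) : ℝ) / (p : ℝ) ^ k)

/-!
Since `𝔭` has residue degree one and is unramified over `p`, reduction modulo `𝔭 ^ k` is a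
ring homomorphism `π : 𝓞 K → ℤ/p^kℤ` with kernel `𝔭 ^ k`. As `ω₁ ∉ 𝔭`, the ideals `𝔭 ^ k` and
`𝔡 = (ω₁, ω₂)` are coprime, so the summation condition becomes the linear congruence
`π(qω₁) n₁ + π(qω₂) n₂ = -π(a₁ω₁ + a₂ω₂)`, whose leading coefficient is a unit. Solving for `n₁`
turns `S` into a constant phase times the complete additive character sum over `n₂` of
`e((g₂ - g₁ π(ω₂)/π(ω₁)) n₂ / p^k)`, which is `p^k` or `0` according as
`g₂ π(ω₁) = g₁ π(ω₂)`, i.e. as `𝔭 ^ k ∣ (g₂ω₁ - g₁ω₂)`.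
-/

open Finset

theorem eC_intCast_div_eq_stdAddChar (N : ℕ) [NeZero N] (m : ℤ) :
    eC ((m : ℝ) / N) = ZMod.stdAddChar (m : ZMod N) := by
  rw [eC, ZMod.stdAddChar_coe, Complex.ofReal_div, Complex.ofReal_intCast, Complex.ofReal_natCast,
    mul_div_assoc]

theorem sum_Icc_intCast_eq_sum_zmod {M : Type*} [AddCommMonoid M] (N : ℕ) [NeZero N]
    (f : ZMod N → M) : ∑ n ∈ Icc (1 : ℤ) N, f n = ∑ x, f x := by
  have hinj : Set.InjOn (fun n : ℤ ↦ (n : ZMod N)) (Icc (1 : ℤ) N) := by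
    intro m hm n hn hmn
    simp only [coe_Icc, Set.mem_Icc] at hm hn
    have hdvd := (ZMod.intCast_eq_intCast_iff_dvd_sub m n N).1 hmn
    have := Int.eq_zero_of_abs_lt_dvd hdvd (abs_lt.2 ⟨by omega, by omega⟩)
    omega
  have himage : (Icc (1 : ℤ) N).image (fun n : ℤ ↦ (n : ZMod N)) = univ :=
    eq_univ_of_card _ (by rw [card_image_of_injOn hinj, Int.card_Icc, ZMod.card]; omega)
  rw [← himage, sum_image hinj]

theorem finsum_Icc_prod_eq_sum_zmod {M : Type*} [AddCommMonoid M] (N : ℕ) [NeZero N]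
    (P : ZMod N × ZMod N → Prop) [DecidablePred P] (f : ZMod N × ZMod N → M) :
    ∑ᶠ (n : ℤ × ℤ) (_ : 1 ≤ n.1 ∧ n.1 ≤ N ∧ 1 ≤ n.2 ∧ n.2 ≤ N ∧ P (n.1, n.2)), f (n.1, n.2) =
      ∑ x with P x, f x := by
  rw [finsum_cond_eq_sum_of_cond_iff _ (t := {n ∈ Icc (1 : ℤ) N ×ˢ Icc (1 : ℤ) N | P (n.1, n.2)})
    (fun {n} _ ↦ by simp only [mem_filter, mem_product, mem_Icc]; tauto),
    sum_filter, sum_product, sum_filter, Fintype.sum_prod_type,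
    sum_Icc_intCast_eq_sum_zmod N (fun x ↦ ∑ y ∈ Icc (1 : ℤ) N, if P (x, y) then f (x, y) else 0)]
  exact sum_congr rfl fun x _ ↦
    sum_Icc_intCast_eq_sum_zmod N (fun y ↦ if P (x, y) then f (x, y) else 0)

theorem AddChar.sum_filter_linear_eq {R R' : Type*} [CommRing R] [Fintype R] [DecidableEq R]
    [CommRing R'] [IsDomain R'] {ψ : AddChar R R'} (hψ : ψ.IsPrimitive) (u : Rˣ)
    (v b g₁ g₂ : R) :
    ∑ x : R × R with u * x.1 + v * x.2 = b, ψ (g₁ * x.1 + g₂ * x.2) =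
      if g₂ * u = g₁ * v then Fintype.card R * ψ (g₁ * b * ↑u⁻¹) else 0 := by
  have hsol : univ.filter (fun x : R × R ↦ u * x.1 + v * x.2 = b) =
      univ.image (fun t ↦ (↑u⁻¹ * (b - v * t), t)) := by
    ext ⟨x, y⟩
    simp only [mem_filter, mem_univ, true_and, mem_image, Prod.mk.injEq]
    constructor
    · rintro rfl
      exact ⟨y, by rw [add_sub_cancel_right, Units.inv_mul_cancel_left], rfl⟩
    · rintro ⟨t, rfl, rfl⟩
      rw [Units.mul_inv_cancel_left, sub_add_cancel]
  have hterm (t : R) : ψ (g₁ * (↑u⁻¹ * (b - v * t)) + g₂ * t) =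
      ψ (g₁ * b * ↑u⁻¹) * ψ (t * (↑u⁻¹ * (g₂ * u - g₁ * v))) := by
    rw [← AddChar.map_add_eq_mul]
    congr 1
    linear_combination (g₂ * t) * u.inv_mul.symm
  rw [hsol, sum_image (fun s _ t _ h ↦ (Prod.ext_iff.1 h).2)]
  simp only [hterm, ← mul_sum, AddChar.sum_mulShift _ hψ, Units.mul_right_eq_zero, sub_eq_zero]
  split_ifs <;> ring

namespace Ideal

variable {R : Type*} [CommRing R] {𝔭 : Ideal R} {p : ℕ}

theorem intCast_mem_iff_of_natCast_mem [𝔭.IsPrime] (hp : p.Prime) (hp𝔭 : (p : R) ∈ 𝔭) (m : ℤ) :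
    (m : R) ∈ 𝔭 ↔ (p : ℤ) ∣ m := by
  have : Fact p.Prime := ⟨hp⟩
  have hcomap : 𝔭.comap (Int.castRingHom R) = span {(p : ℤ)} :=
    ((Int.ideal_span_isMaximal_of_prime p).eq_of_le (comap_ne_top _ IsPrime.ne_top')
      (span_le.2 (by simpa using hp𝔭))).symm
  rw [← mem_span_singleton, ← hcomap, mem_comap, eq_intCast]

theorem mem_pow_of_mul_mem_pow_succ [IsDedekindDomain R] [𝔭.IsPrime] {a b : R} (ha : a ∈ 𝔭)
    (ha2 : a ∉ 𝔭 ^ 2) {k : ℕ} (hab : a * b ∈ 𝔭 ^ (k + 1)) : b ∈ 𝔭 ^ k := by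
  have h𝔭 : 𝔭 ≠ ⊥ := by rintro rfl; simp_all
  simp only [← span_singleton_le_iff_mem, ← dvd_iff_le,
    ← span_singleton_mul_span_singleton] at ha ha2 hab ⊢
  have hmult : emultiplicity 𝔭 (span {a}) = 1 := by
    simpa using emultiplicity_eq_coe.2 ⟨(pow_one 𝔭).symm ▸ ha, ha2⟩
  rw [pow_dvd_iff_le_emultiplicity, emultiplicity_mul (prime_of_isPrime h𝔭 ‹_›), hmult] at hab
  rw [pow_dvd_iff_le_emultiplicity]
  push_cast at hab
  rwa [add_comm, ENat.add_le_add_iff_left ENat.one_ne_top] at hab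

theorem intCast_mem_pow_iff [IsDedekindDomain R] [𝔭.IsPrime] (hp : p.Prime) (hp𝔭 : (p : R) ∈ 𝔭)
    (hunram : (p : R) ∉ 𝔭 ^ 2) (k : ℕ) (m : ℤ) : (m : R) ∈ 𝔭 ^ k ↔ (p : ℤ) ^ k ∣ m := by
  induction k generalizing m with
  | zero => simp
  | succ k ih =>
    refine ⟨fun hm ↦ ?_, fun ⟨c, hc⟩ ↦ ?_⟩
    · obtain ⟨m', rfl⟩ :=
        (intCast_mem_iff_of_natCast_mem hp hp𝔭 m).1 (pow_le_self k.succ_ne_zero hm)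
      push_cast at hm
      rw [pow_succ']
      exact mul_dvd_mul_left _ ((ih m').1 (mem_pow_of_mul_mem_pow_succ hp𝔭 hunram hm))
    · rw [hc]
      push_cast
      exact mul_mem_right _ _ (pow_mem_pow hp𝔭 _)

theorem isUnit_of_ker_eq_pow {S : Type*} [CommRing S] [𝔭.IsMaximal] {f : R →+* S} {k : ℕ}
    (hf : RingHom.ker f = 𝔭 ^ k) {x : R} (hx : x ∉ 𝔭) : IsUnit (f x) := by
  obtain ⟨y, i, hi, hyx⟩ := IsMaximal.exists_inv_pow 𝔭 hx k
  rw [← hf, RingHom.mem_ker] at hi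
  refine .of_mul_eq_one_right (f y) ?_
  rw [← map_mul, ← add_zero (f _), ← hi, ← map_add, hyx, map_one]

theorem mem_pow_mul_iff_of_not_le [𝔭.IsMaximal] {J : Ideal R} (hJ : ¬ J ≤ 𝔭) (k : ℕ) {z : R}
    (hz : z ∈ J) : z ∈ 𝔭 ^ k * J ↔ z ∈ 𝔭 ^ k := by
  obtain ⟨x, hxJ, hx𝔭⟩ := SetLike.not_le_iff_exists.1 hJ
  obtain ⟨y, i, hi, hyx⟩ := IsMaximal.exists_inv_pow 𝔭 hx𝔭 k
  have hcop : IsCoprime (𝔭 ^ k) J :=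
    isCoprime_iff_exists.2 ⟨i, hi, y * x, J.mul_mem_left y hxJ, by rw [add_comm, hyx]⟩
  rw [mul_eq_inf_of_isCoprime hcop, Submodule.mem_inf]
  exact ⟨And.left, fun h ↦ ⟨h, hz⟩⟩

theorem mul_mem_pow_iff_of_notMem [𝔭.IsMaximal] {a : R} (ha : a ∉ 𝔭) (k : ℕ) {b : R} :
    a * b ∈ 𝔭 ^ k ↔ b ∈ 𝔭 ^ k :=
  ⟨fun h ↦ (IsMaximal.mul_mem_pow 𝔭 h).resolve_left ha, mul_mem_left _ a⟩

end Ideal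

namespace NumberField

variable {K : Type*} [Field K] [NumberField K] {𝔭 : Ideal (𝓞 K)} {p : ℕ}

theorem notMem_of_not_dvd_norm (hnorm : Ideal.absNorm 𝔭 = p) {x : 𝓞 K}
    (hx : ¬ (p : ℤ) ∣ Algebra.norm ℤ x) : x ∉ 𝔭 :=
  fun h ↦ hx (hnorm ▸ Ideal.absNorm_dvd_norm_of_mem h)

theorem exists_ringHom_zmod_ker_eq_pow [𝔭.IsPrime] (hp : p.Prime) (hnorm : Ideal.absNorm 𝔭 = p)
    (hunram : (p : 𝓞 K) ∉ 𝔭 ^ 2) (k : ℕ) :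
    ∃ π : 𝓞 K →+* ZMod (p ^ k), RingHom.ker π = 𝔭 ^ k := by
  have hp𝔭 : (p : 𝓞 K) ∈ 𝔭 := hnorm ▸ Ideal.absNorm_mem 𝔭
  have : CharP (𝓞 K ⧸ 𝔭 ^ k) (p ^ k) := ⟨fun m ↦ by
    rw [← map_natCast (Ideal.Quotient.mk _), Ideal.Quotient.eq_zero_iff_mem, ← Int.cast_natCast,
      Ideal.intCast_mem_pow_iff hp hp𝔭 hunram]
    exact_mod_cast Iff.rfl⟩
  have hcard : Nat.card (𝓞 K ⧸ 𝔭 ^ k) = p ^ k := by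
    rw [← hnorm, ← map_pow, Ideal.absNorm_apply, Submodule.cardQuot_apply]
  have : Finite (𝓞 K ⧸ 𝔭 ^ k) := Nat.finite_of_card_ne_zero (hcard ▸ pow_ne_zero k hp.ne_zero)
  let : Fintype (𝓞 K ⧸ 𝔭 ^ k) := Fintype.ofFinite _
  let e : ZMod (p ^ k) ≃+* 𝓞 K ⧸ 𝔭 ^ k :=
    ZMod.ringEquiv _ (Nat.card_eq_fintype_card.symm.trans hcard)
  refine ⟨e.symm.toRingHom.comp (Ideal.Quotient.mk _), ?_⟩
  ext x
  simp [RingHom.mem_ker, Ideal.Quotient.eq_zero_iff_mem]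

end NumberField

theorem expSumS_eq_sum_zmod {K : Type} [Field K] [NumberField K] {𝔭 : Ideal (𝓞 K)} [𝔭.IsMaximal]
    {ω₁ ω₂ : 𝓞 K} (hω₁ : ω₁ ∉ 𝔭) {p k : ℕ} [NeZero p] {π : 𝓞 K →+* ZMod (p ^ k)}
    (hπ : RingHom.ker π = 𝔭 ^ k) (a₁ a₂ q g₁ g₂ : ℤ) :
    expSumS ω₁ ω₂ a₁ a₂ q g₁ g₂ p k 𝔭 =
      ∑ x : ZMod (p ^ k) × ZMod (p ^ k) with
        π (q * ω₁) * x.1 + π (q * ω₂) * x.2 = -π (a₁ * ω₁ + a₂ * ω₂),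
        ZMod.stdAddChar (g₁ * x.1 + g₂ * x.2 : ZMod (p ^ k)) := by
  have hcond (n : ℤ × ℤ) :
      (a₁ + n.1 * q) • ω₁ + (a₂ + n.2 * q) • ω₂ ∈ 𝔭 ^ k * Ideal.span {ω₁, ω₂} ↔
        π (q * ω₁) * n.1 + π (q * ω₂) * n.2 = -π (a₁ * ω₁ + a₂ * ω₂) := by
    have hJ : ¬ Ideal.span {ω₁, ω₂} ≤ 𝔭 := fun h ↦ hω₁ (h (Ideal.subset_span (by simp)))
    rw [Ideal.mem_pow_mul_iff_of_not_le hJ k (add_mem (zsmul_mem (Ideal.subset_span (by simp)) _)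
      (zsmul_mem (Ideal.subset_span (by simp)) _)), ← hπ, RingHom.mem_ker]
    simp only [zsmul_eq_mul, map_add, map_mul, map_intCast, Int.cast_add, Int.cast_mul]
    constructor <;> intro h <;> linear_combination h
  have hterm (n : ℤ × ℤ) : eC (((g₁ * n.1 + g₂ * n.2 : ℤ) : ℝ) / (p : ℝ) ^ k) =
      ZMod.stdAddChar (g₁ * n.1 + g₂ * n.2 : ZMod (p ^ k)) := by
    rw [← Nat.cast_pow, eC_intCast_div_eq_stdAddChar]
    push_cast
    rfl
  unfold expSumS
  simp only [hcond, hterm]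
  simp only [← Nat.cast_pow]
  exact finsum_Icc_prod_eq_sum_zmod (p ^ k)
    (fun x ↦ π (q * ω₁) * x.1 + π (q * ω₂) * x.2 = -π (a₁ * ω₁ + a₂ * ω₂))
    (fun x ↦ ZMod.stdAddChar (g₁ * x.1 + g₂ * x.2 : ZMod (p ^ k)))

open Classical in
theorem expSumS_eq_ite {K : Type} [Field K] [NumberField K] {𝔭 : Ideal (𝓞 K)} [𝔭.IsMaximal]
    {ω₁ ω₂ : 𝓞 K} (hω₁ : ω₁ ∉ 𝔭) {q : ℤ} (hq : (q : 𝓞 K) ∉ 𝔭) {p k : ℕ} [NeZero p]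
    {π : 𝓞 K →+* ZMod (p ^ k)} (hπ : RingHom.ker π = 𝔭 ^ k) (a₁ a₂ g₁ g₂ : ℤ) :
    expSumS ω₁ ω₂ a₁ a₂ q g₁ g₂ p k 𝔭 =
      if g₂ • ω₁ - g₁ • ω₂ ∈ 𝔭 ^ k then
        (p : ℂ) ^ k *
          ZMod.stdAddChar (-((a₁ * g₁ + a₂ * g₂ : ℤ) : ZMod (p ^ k)) * (q : ZMod (p ^ k))⁻¹)
      else 0 := by
  have hmem (z : 𝓞 K) : z ∈ 𝔭 ^ k ↔ π z = 0 := by rw [← RingHom.mem_ker, hπ]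
  obtain ⟨u, hu⟩ : IsUnit (π (q * ω₁)) :=
    Ideal.isUnit_of_ker_eq_pow hπ (Ideal.IsPrime.mul_notMem inferInstance hq hω₁)
  have hcond : (g₂ : ZMod (p ^ k)) * π (q * ω₁) = g₁ * π (q * ω₂) ↔
      g₂ • ω₁ - g₁ • ω₂ ∈ 𝔭 ^ k := by
    rw [← Ideal.mul_mem_pow_iff_of_notMem hq, hmem]
    simp only [zsmul_eq_mul, map_mul, map_sub, map_intCast]
    constructor <;> intro h <;> linear_combination h
  rw [expSumS_eq_sum_zmod hω₁ hπ, ← hu,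
    AddChar.sum_filter_linear_eq (ZMod.isPrimitive_stdAddChar _), hu, ZMod.card]
  simp only [hcond]
  split_ifs with hg
  · push_cast
    congr 2
    have hg' : (g₂ : ZMod (p ^ k)) * π ω₁ = g₁ * π ω₂ := by
      rw [hmem] at hg
      simp only [map_sub, zsmul_eq_mul, map_mul, map_intCast] at hg
      linear_combination hg
    have hinv : (q : ZMod (p ^ k)) * π ω₁ * ↑u⁻¹ = 1 := by
      rw [← map_intCast π, ← map_mul, ← hu, u.mul_inv]
    have hqinv : (q : ZMod (p ^ k)) * (q : ZMod (p ^ k))⁻¹ = 1 :=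
      ZMod.mul_inv_of_unit _ (map_intCast π q ▸ Ideal.isUnit_of_ker_eq_pow hπ hq)
    -- `g₁ π(ω₂) = g₂ π(ω₁)` turns `g₁ (-π(a₁ω₁ + a₂ω₂)) / π(qω₁)` into `-(a₁g₁ + a₂g₂) / q`.
    simp only [map_add, map_mul, map_intCast]
    linear_combination a₂ * ↑u⁻¹ * hg' - (a₁ * g₁ + a₂ * g₂) * (q : ZMod (p ^ k))⁻¹ * hinv +
      (a₁ * g₁ + a₂ * g₂) * π ω₁ * ↑u⁻¹ * hqinv
  · rfl

theorem statement7_general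
    (K : Type) [Field K] [NumberField K]
    (ω₁ ω₂ : 𝓞 K)
    (q a₁ a₂ : ℤ) (k : ℕ)
    (p : ℕ) (hp : p.Prime) (𝔭 : Ideal (𝓞 K)) (hprime : 𝔭.IsPrime)
    (hnorm : Ideal.absNorm 𝔭 = p) (hunram : (p : 𝓞 K) ∉ 𝔭 ^ 2)
    (hpq : ¬ ((p : ℤ) ∣ q * Algebra.norm ℤ (ω₁ * ω₂)))
    (g₁ g₂ : ℤ) :
    ((g₂ • ω₁ - g₁ • ω₂ ∈ 𝔭 ^ k) →
      ∀ qinv : ℤ, Int.ModEq ((p : ℤ) ^ k) (q * qinv) 1 →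
        expSumS ω₁ ω₂ a₁ a₂ q g₁ g₂ p k 𝔭
          = ((p : ℂ)) ^ k * eC (-(((a₁ * g₁ + a₂ * g₂) * qinv : ℤ) : ℝ) / (p : ℝ) ^ k)) ∧
    ((g₂ • ω₁ - g₁ • ω₂ ∉ 𝔭 ^ k) →
      expSumS ω₁ ω₂ a₁ a₂ q g₁ g₂ p k 𝔭 = 0) := by
  have : NeZero p := ⟨hp.ne_zero⟩
  have hp𝔭 : (p : 𝓞 K) ∈ 𝔭 := hnorm ▸ Ideal.absNorm_mem 𝔭
  have : 𝔭.IsMaximal := hprime.isMaximal (by rintro rfl; simp [hp.ne_zero] at hp𝔭)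
  have hq : (q : 𝓞 K) ∉ 𝔭 := by
    rw [Ideal.intCast_mem_iff_of_natCast_mem hp hp𝔭]
    exact fun h ↦ hpq (h.mul_right _)
  have hω₁ : ω₁ ∉ 𝔭 := fun h ↦
    notMem_of_not_dvd_norm hnorm (fun hdvd ↦ hpq (hdvd.mul_left q)) (𝔭.mul_mem_right ω₂ h)
  obtain ⟨π, hπ⟩ := exists_ringHom_zmod_ker_eq_pow hp hnorm hunram k
  rw [expSumS_eq_ite hω₁ hq hπ]
  refine ⟨fun hg qinv hqinv ↦ ?_, fun hg ↦ if_neg hg⟩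
  have hqinv' : (q : ZMod (p ^ k)) * qinv = 1 := by
    exact_mod_cast (ZMod.intCast_eq_intCast_iff (q * qinv) 1 (p ^ k)).2 (by exact_mod_cast hqinv)
  rw [if_pos hg, ZMod.inv_eq_of_mul_eq_one _ _ _ hqinv', ← Int.cast_neg (R := ℝ),
    ← Nat.cast_pow (α := ℝ), eC_intCast_div_eq_stdAddChar]
  push_cast
  ring

theorem statement7
    (K : Type) [Field K] [NumberField K] (hdeg : Module.finrank ℚ K = 3)
    (ω₁ ω₂ : 𝓞 K) (hω₁ : ω₁ ≠ 0) (hω₂ : ω₂ ≠ 0)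
    (hli : LinearIndependent ℚ ![((ω₁ : K)), ((ω₂ : K))])
    (q a₁ a₂ : ℤ) (hq : 1 ≤ q) (k : ℕ) (hk : 1 ≤ k)
    (p : ℕ) (hp : p.Prime) (𝔭 : Ideal (𝓞 K)) (hprime : 𝔭.IsPrime)
    (hnorm : Ideal.absNorm 𝔭 = p) (hunram : (p : 𝓞 K) ∉ 𝔭 ^ 2)
    (hpq : ¬ ((p : ℤ) ∣ q * Algebra.norm ℤ (ω₁ * ω₂)))
    (g₁ g₂ : ℤ) :
    ((g₂ • ω₁ - g₁ • ω₂ ∈ 𝔭 ^ k) →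
      ∀ qinv : ℤ, Int.ModEq ((p : ℤ) ^ k) (q * qinv) 1 →
        expSumS ω₁ ω₂ a₁ a₂ q g₁ g₂ p k 𝔭
          = ((p : ℂ)) ^ k * eC (-(((a₁ * g₁ + a₂ * g₂) * qinv : ℤ) : ℝ) / (p : ℝ) ^ k)) ∧
    ((g₂ • ω₁ - g₁ • ω₂ ∉ 𝔭 ^ k) →
      expSumS ω₁ ω₂ a₁ a₂ q g₁ g₂ p k 𝔭 = 0) :=
  statement7_general K ω₁ ω₂ q a₁ a₂ k p hp 𝔭 hprime hnorm hunram hpq g₁ g₂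

end
end

section
/- Let K be a degree-3 number field with ring of integers O_K. Let d ≥ 1 be a squarefree integer and 𝔧 a nonzero ideal of O_K. Then μ(d) · Σ_{𝔦} μ_K(𝔦) = 1 if d divides N(𝔧), and = 0 otherwise, where the (finite) sum runs over the nonzero ideals 𝔦 of O_K dividing 𝔧 + dO_K (the gcd of 𝔧 and dO_K) and such that d divides N(𝔦). -/
open scoped BigOperators
open NumberField UniqueFactorizationMonoid

noncomputable section

attribute [local instance] Classical.propDecidable

/-- The Möbius function on nonzero ideals of the ring of integers of a number field:
`(-1)^r` on squarefree ideals that are products of `r` distinct prime ideals, and `0` on ideals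
divisible by the square of a prime ideal. -/
def muK {K : Type} [Field K] [NumberField K] (I : Ideal (𝓞 K)) : ℤ :=
  if Squarefree I then (-1) ^ (normalizedFactors I).card else 0

/-!
The squarefree divisors of `𝔤 = 𝔧 + dO_K` are the products `∏ T` of sets `T` of prime factors
of `𝔤`, with `μ_K(∏ T) = (-1)^|T|`. The norm of a prime `𝔭` is a power of its residue
characteristic `p(𝔭) = N(𝔭 ∩ ℤ)`, and `p(𝔭) ∣ d` when `𝔭 ∣ 𝔤`; as `d` is squarefree,
`d ∣ N(∏ T)` says exactly that `p(T)` contains every prime factor of `d`. Inclusion–exclusion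
over the fibres of `p` turns the sum of `(-1)^|T|` over such `T` into `(-1)^ω(d)` when `p` maps
the prime factors of `𝔤` onto those of `d`, and `0` otherwise; and `p` is onto exactly when every
prime factor `q` of `d` divides `N(𝔧)` (a prime `𝔭 ∣ 𝔧` above `q` contains `d`, so divides `𝔤`),
that is, when `d ∣ N(𝔧)`. Finally `μ(d) = (-1)^ω(d)`.
-/

theorem Finset.sum_powerset_subset_image_neg_one_pow {α β R : Type*} [DecidableEq α]
    [DecidableEq β] [CommRing R] (π : α → β) (F : Finset α) (Q : Finset β) :
    ∑ T ∈ F.powerset, (if Q ⊆ T.image π then (-1 : R) ^ T.card else 0) =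
      if F.image π = Q then (-1) ^ Q.card else 0 := by
  induction F using Finset.induction generalizing Q with
  | empty =>
    simp only [Finset.powerset_empty, Finset.sum_singleton, Finset.image_empty,
      Finset.subset_empty, eq_comm]
    split_ifs with hQ <;> simp [hQ]
  | @insert a F ha ih =>
    have hins : ∀ T ∈ F.powerset,
        (if Q ⊆ (insert a T).image π then (-1 : R) ^ (insert a T).card else 0) =
          -(if Q.erase (π a) ⊆ T.image π then (-1 : R) ^ T.card else 0) := by
      intro T hT
      have haT : a ∉ T := fun h => ha (Finset.mem_powerset.mp hT h)
      simp only [Finset.image_insert, Finset.subset_insert_iff, Finset.card_insert_of_notMem haT,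
        pow_succ]
      split_ifs <;> simp
    rw [Finset.sum_powerset_insert ha, Finset.sum_congr rfl hins, Finset.sum_neg_distrib, ih, ih,
      Finset.image_insert]
    set X := F.image π
    by_cases hbX : π a ∈ X
    · have : X ≠ Q.erase (π a) := fun h => Finset.notMem_erase (π a) Q (h ▸ hbX)
      simp [Finset.insert_eq_of_mem hbX, this]
    by_cases hbQ : π a ∈ Q
    · have hXQ : X ≠ Q := fun h => hbX (h ▸ hbQ)
      have hiff : X = Q.erase (π a) ↔ insert (π a) X = Q :=
        ⟨fun h => h ▸ Finset.insert_erase hbQ, fun h => h ▸ (Finset.erase_insert hbX).symm⟩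
      rw [if_neg hXQ, ← Finset.card_erase_add_one hbQ, pow_succ]
      simp only [hiff]
      split_ifs <;> simp
    · have : insert (π a) X ≠ Q := fun h => hbQ (h ▸ Finset.mem_insert_self _ _)
      simp [Finset.erase_eq_of_notMem hbQ, this]

namespace UniqueFactorizationMonoid

variable {M : Type*} [CommMonoidWithZero M] [UniqueFactorizationMonoid M] [Subsingleton Mˣ]
  {a : M}

theorem normalizedFactors_prod_of_subset_primeFactors {T : Finset M} (hT : T ⊆ primeFactors a) :
    normalizedFactors (∏ p ∈ T, p) = T.val := by
  rw [Finset.prod_eq_multiset_prod, Multiset.map_id']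
  exact normalizedFactors_prod_eq_self_of_subset (a := a) fun p hp => mem_primeFactors.mp (hT hp)

theorem squarefree_prod_of_subset_primeFactors {T : Finset M} (hT : T ⊆ primeFactors a) :
    Squarefree (∏ p ∈ T, p) := by
  rcases subsingleton_or_nontrivial M with _ | _
  · exact fun x _ => isUnit_of_subsingleton x
  have h0 : ∏ p ∈ T, p ≠ 0 := by
    rw [Finset.prod_eq_multiset_prod, Multiset.map_id']
    exact prod_ne_zero_of_subset_normalizedFactors fun p hp => mem_primeFactors.mp (hT hp)
  rw [squarefree_iff_nodup_normalizedFactors h0, normalizedFactors_prod_of_subset_primeFactors hT]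
  exact T.nodup

theorem setOf_dvd_squarefree_eq_image_powerset (ha : a ≠ 0) :
    {b | b ∣ a ∧ Squarefree b} = (fun T => ∏ p ∈ T, p) '' ↑(primeFactors a).powerset := by
  have : Nontrivial M := ⟨⟨a, 0, ha⟩⟩
  ext b
  simp only [Set.mem_ofPred_eq, Set.mem_image, Finset.coe_powerset, Set.mem_preimage,
    Set.mem_powerset_iff, Finset.coe_subset]
  constructor
  · rintro ⟨hba, hb⟩
    have hb0 : b ≠ 0 := hb.ne_zero
    refine ⟨primeFactors b, ?_, ?_⟩
    · intro p hp
      rw [mem_primeFactors] at hp ⊢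
      exact Multiset.subset_of_le
        ((dvd_iff_normalizedFactors_le_normalizedFactors hb0 ha).mp hba) hp
    · rw [Finset.prod_eq_multiset_prod, Multiset.map_id',
        primeFactors_val_eq_normalizedFactors hb.isRadical]
      exact associated_iff_eq.mp (prod_normalizedFactors hb0)
  · rintro ⟨T, hT, rfl⟩
    refine ⟨Finset.prod_primes_dvd a ?_ ?_, squarefree_prod_of_subset_primeFactors hT⟩
    · exact fun p hp => prime_of_normalized_factor p (mem_primeFactors.mp (hT hp))
    · exact fun p hp => dvd_of_mem_normalizedFactors (mem_primeFactors.mp (hT hp))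

theorem injOn_prod_powerset_primeFactors :
    Set.InjOn (fun T : Finset M => ∏ p ∈ T, p) ↑(primeFactors a).powerset := by
  intro T₁ hT₁ T₂ hT₂ h
  rw [Finset.mem_coe, Finset.mem_powerset] at hT₁ hT₂
  rw [← Finset.val_inj, ← normalizedFactors_prod_of_subset_primeFactors hT₁,
    ← normalizedFactors_prod_of_subset_primeFactors hT₂]
  exact congrArg normalizedFactors h

theorem finsum_dvd_eq_sum_powerset_primeFactors {R : Type*} [AddCommMonoid R] (ha : a ≠ 0)
    (p : M → Prop) [DecidablePred p] {f : M → R} (hf : ∀ b, ¬Squarefree b → f b = 0) :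
    ∑ᶠ (b) (_ : b ∣ a ∧ p b), f b =
      ∑ T ∈ (primeFactors a).powerset, if p (∏ x ∈ T, x) then f (∏ x ∈ T, x) else 0 := by
  have hsupp : ∀ b ∈ Function.support f,
      b ∈ {b | b ∣ a ∧ p b} ↔ b ∈ {b | b ∣ a ∧ Squarefree b} ∩ {b | p b} := fun b hb => by
    have : Squarefree b := not_not.mp (mt (hf b) hb)
    simp [this]
  calc ∑ᶠ (b) (_ : b ∣ a ∧ p b), f b
      = ∑ᶠ b ∈ {b | b ∣ a ∧ Squarefree b} ∩ {b | p b}, f b :=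
        finsum_mem_inter_support_eq' f _ _ hsupp
    _ = ∑ᶠ T ∈ ↑(primeFactors a).powerset ∩ {T | p (∏ x ∈ T, x)}, f (∏ x ∈ T, x) := by
        rw [setOf_dvd_squarefree_eq_image_powerset ha, ← Set.image_inter_preimage,
          finsum_mem_image (injOn_prod_powerset_primeFactors.mono Set.inter_subset_left)]
        rfl
    _ = _ := by
        rw [← Finset.sum_filter, ← finsum_mem_coe_finset, Finset.coe_filter]
        rfl

end UniqueFactorizationMonoid

theorem Nat.dvd_iff_forall_primeFactors_dvd_of_squarefree {d n : ℕ} (hd : Squarefree d) :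
    d ∣ n ↔ ∀ p ∈ d.primeFactors, p ∣ n := by
  refine ⟨fun h p hp => (Nat.dvd_of_mem_primeFactors hp).trans h, fun h => ?_⟩
  rw [← Nat.prod_primeFactors_of_squarefree hd]
  exact Finset.prod_primes_dvd n (fun p hp => (Nat.prime_of_mem_primeFactors hp).prime) h

theorem Int.absNorm_eq_iff_eq_span {I : Ideal ℤ} {q : ℕ} :
    Ideal.absNorm I = q ↔ I = Ideal.span {(q : ℤ)} := by
  constructor
  · intro h
    rw [← Int.ideal_span_absNorm_eq_self I, h]
  · rintro rfl
    simp

namespace Ideal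

theorem natCast_mem_iff_absNorm_under_dvd {R : Type*} [Ring R] {P : Ideal R} {n : ℕ} :
    (n : R) ∈ P ↔ absNorm (P.under ℤ) ∣ n := by
  rw [← Int.cast_natCast, Int.cast_mem_ideal_iff, Int.natCast_dvd_natCast]

variable {S : Type*} [CommRing S] [IsDedekindDomain S]

theorem isMaximal_of_mem_primeFactors {P I : Ideal S} (hP : P ∈ primeFactors I) : P.IsMaximal :=
  have hprime := prime_of_normalized_factor P (mem_primeFactors.mp hP)
  (isPrime_of_prime hprime).isMaximal hprime.ne_zero

variable [Module.Free ℤ S] [Module.Finite ℤ S]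

theorem prime_dvd_absNorm_iff {q : ℕ} (hq : q.Prime) (I : Ideal S) :
    q ∣ absNorm I ↔ ∃ P : Ideal S, P.IsPrime ∧ P ∣ I ∧ absNorm (P.under ℤ) = q := by
  constructor
  · intro h
    obtain ⟨P, hP, hPq, hPI⟩ := exists_isMaximal_dvd_of_dvd_absNorm' hq I h
    exact ⟨P, hP.isPrime, hPI, Int.absNorm_eq_iff_eq_span.mpr hPq⟩
  · rintro ⟨P, -, hPI, rfl⟩
    exact (Int.absNorm_under_dvd_absNorm P).trans (absNorm_dvd_absNorm_of_le (le_of_dvd hPI))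

theorem IsMaximal.prime_dvd_absNorm_iff {P : Ideal S} (hP : P.IsMaximal) {q : ℕ} (hq : q.Prime) :
    q ∣ absNorm P ↔ absNorm (P.under ℤ) = q := by
  rw [Ideal.prime_dvd_absNorm_iff hq]
  constructor
  · rintro ⟨P', hP', hP'P, rfl⟩
    rw [hP.eq_of_le hP'.ne_top (le_of_dvd hP'P)]
  · exact fun h => ⟨P, hP.isPrime, dvd_rfl, h⟩

theorem dvd_absNorm_prod_iff {T : Finset (Ideal S)} (hT : ∀ P ∈ T, P.IsMaximal) {d : ℕ}
    (hd : Squarefree d) :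
    d ∣ absNorm (∏ P ∈ T, P) ↔ d.primeFactors ⊆ T.image fun P => absNorm (P.under ℤ) := by
  rw [Nat.dvd_iff_forall_primeFactors_dvd_of_squarefree hd, map_prod]
  refine forall₂_congr fun q hq => ?_
  have hq := Nat.prime_of_mem_primeFactors hq
  rw [hq.prime.dvd_finsetProd_iff, Finset.mem_image]
  exact exists_congr fun P => and_congr_right fun hP => (hT P hP).prime_dvd_absNorm_iff hq

variable {d : ℕ} (J : Ideal S)

theorem sup_span_natCast_ne_bot (hd : d ≠ 0) : J ⊔ span {(d : S)} ≠ ⊥ := by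
  have : IsAddTorsionFree S := .of_isTorsionFree ℤ _
  have := CharZero.of_isAddTorsionFree S S
  refine ne_bot_of_le_ne_bot ?_ le_sup_right
  simpa using hd

theorem mem_primeFactors_sup_span_iff (hd : d ≠ 0) {P : Ideal S} :
    P ∈ primeFactors (J ⊔ span {(d : S)}) ↔
      P.IsPrime ∧ J ≤ P ∧ absNorm (P.under ℤ) ∣ d := by
  rw [mem_primeFactors, mem_normalizedFactors_iff (sup_span_natCast_ne_bot J hd), sup_le_iff,
    span_singleton_le_iff_mem, natCast_mem_iff_absNorm_under_dvd]

theorem absNorm_under_mem_primeFactors_of_mem_primeFactors_sup_span (hd : d ≠ 0) {P : Ideal S}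
    (hP : P ∈ primeFactors (J ⊔ span {(d : S)})) :
    absNorm (P.under ℤ) ∈ d.primeFactors := by
  obtain ⟨hPprime, -, hPd⟩ := (mem_primeFactors_sup_span_iff J hd).mp hP
  have : NeZero P := ⟨(prime_of_normalized_factor P (mem_primeFactors.mp hP)).ne_zero⟩
  exact Nat.mem_primeFactors.mpr ⟨Nat.absNorm_under_prime P, hPd, hd⟩

theorem prime_dvd_absNorm_iff_of_dvd (hd : d ≠ 0) {q : ℕ} (hq : q.Prime) (hqd : q ∣ d) :
    q ∣ absNorm J ↔
      q ∈ (primeFactors (J ⊔ span {(d : S)})).image fun P => absNorm (P.under ℤ) := by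
  simp only [prime_dvd_absNorm_iff hq, Finset.mem_image, mem_primeFactors_sup_span_iff J hd,
    dvd_iff_le]
  constructor
  · rintro ⟨P, hP, hPJ, rfl⟩
    exact ⟨P, ⟨hP, hPJ, hqd⟩, rfl⟩
  · rintro ⟨P, ⟨hP, hPJ, -⟩, rfl⟩
    exact ⟨P, hP, hPJ, rfl⟩

theorem image_absNorm_under_primeFactors_sup_span_eq_iff (hd : Squarefree d) :
    (primeFactors (J ⊔ span {(d : S)})).image (fun P => absNorm (P.under ℤ)) = d.primeFactors ↔
      d ∣ absNorm J := by
  rw [Nat.dvd_iff_forall_primeFactors_dvd_of_squarefree hd, Finset.Subset.antisymm_iff,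
    and_iff_right (Finset.image_subset_iff.mpr fun P hP =>
      absNorm_under_mem_primeFactors_of_mem_primeFactors_sup_span J hd.ne_zero hP)]
  exact forall₂_congr fun q hq => (prime_dvd_absNorm_iff_of_dvd J hd.ne_zero
    (Nat.prime_of_mem_primeFactors hq) (Nat.dvd_of_mem_primeFactors hq)).symm

end Ideal

theorem ArithmeticFunction.moebius_eq_neg_one_pow_card_primeFactors {d : ℕ} (hd : Squarefree d) :
    ArithmeticFunction.moebius d = (-1) ^ d.primeFactors.card := by
  rw [ArithmeticFunction.moebius_apply_of_squarefree hd,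
    ← (ArithmeticFunction.cardDistinctFactors_eq_cardFactors_iff_squarefree hd.ne_zero).mpr hd,
    ArithmeticFunction.cardDistinctFactors_apply, Nat.primeFactors, List.card_toFinset]

theorem muK_prod_of_subset_primeFactors {K : Type} [Field K] [NumberField K] {I : Ideal (𝓞 K)}
    {T : Finset (Ideal (𝓞 K))} (hT : T ⊆ primeFactors I) :
    muK (∏ P ∈ T, P) = (-1) ^ T.card := by
  rw [muK, if_pos (squarefree_prod_of_subset_primeFactors hT),
    normalizedFactors_prod_of_subset_primeFactors hT, Finset.card_val]

theorem finsum_muK_dvd_sup_span_eq {K : Type} [Field K] [NumberField K] {d : ℕ}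
    (hd : Squarefree d) (J : Ideal (𝓞 K)) :
    ∑ᶠ (I : Ideal (𝓞 K)) (_ : I ∣ J ⊔ Ideal.span {(d : 𝓞 K)} ∧ d ∣ Ideal.absNorm I), muK I =
      if d ∣ Ideal.absNorm J then (-1) ^ d.primeFactors.card else 0 := by
  set G := J ⊔ Ideal.span {(d : 𝓞 K)}
  rw [finsum_dvd_eq_sum_powerset_primeFactors (Ideal.sup_span_natCast_ne_bot J hd.ne_zero) _
    fun I hI => by rw [muK, if_neg hI]]
  have hterm : ∀ T ∈ (primeFactors G).powerset,
      (if d ∣ Ideal.absNorm (∏ P ∈ T, P) then muK (∏ P ∈ T, P) else 0) =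
        if d.primeFactors ⊆ T.image fun P => Ideal.absNorm (P.under ℤ) then (-1 : ℤ) ^ T.card
        else 0 := by
    intro T hT
    rw [Finset.mem_powerset] at hT
    have hmax P (hP : P ∈ T) : P.IsMaximal := Ideal.isMaximal_of_mem_primeFactors (hT hP)
    simp only [Ideal.dvd_absNorm_prod_iff hmax hd, muK_prod_of_subset_primeFactors hT]
  rw [Finset.sum_congr rfl hterm, Finset.sum_powerset_subset_image_neg_one_pow]
  exact if_congr (Ideal.image_absNorm_under_primeFactors_sup_span_eq_iff J hd) rfl rfl

theorem statement9_general
    (K : Type) [Field K] [NumberField K]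
    (d : ℕ) (hsq : Squarefree d)
    (J : Ideal (𝓞 K)) :
    ((d ∣ Ideal.absNorm J) →
      (ArithmeticFunction.moebius d : ℤ) *
          (∑ᶠ (I : Ideal (𝓞 K))
            (_ : I ≠ ⊥ ∧ I ∣ (J ⊔ Ideal.span {(d : 𝓞 K)}) ∧ d ∣ Ideal.absNorm I), muK I)
        = 1) ∧
    (¬ (d ∣ Ideal.absNorm J) →
      (ArithmeticFunction.moebius d : ℤ) *
          (∑ᶠ (I : Ideal (𝓞 K))
            (_ : I ≠ ⊥ ∧ I ∣ (J ⊔ Ideal.span {(d : 𝓞 K)}) ∧ d ∣ Ideal.absNorm I), muK I)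
        = 0) := by
  have hG : J ⊔ Ideal.span {(d : 𝓞 K)} ≠ ⊥ := Ideal.sup_span_natCast_ne_bot J hsq.ne_zero
  have hne_bot (I : Ideal (𝓞 K)) :
      (I ≠ ⊥ ∧ I ∣ J ⊔ Ideal.span {(d : 𝓞 K)} ∧ d ∣ Ideal.absNorm I) ↔
        (I ∣ J ⊔ Ideal.span {(d : 𝓞 K)} ∧ d ∣ Ideal.absNorm I) :=
    and_iff_right_of_imp fun h => by
      simpa only [Submodule.zero_eq_bot] using ne_zero_of_dvd_ne_zero hG h.1
  simp only [hne_bot, finsum_muK_dvd_sup_span_eq hsq J,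
    ArithmeticFunction.moebius_eq_neg_one_pow_card_primeFactors hsq]
  refine ⟨fun h => ?_, fun h => ?_⟩
  · rw [if_pos h, ← pow_add, ← two_mul, pow_mul, neg_one_sq, one_pow]
  · rw [if_neg h, mul_zero]

theorem statement9
    (K : Type) [Field K] [NumberField K] (hdeg : Module.finrank ℚ K = 3)
    (d : ℕ) (hd : 1 ≤ d) (hsq : Squarefree d)
    (J : Ideal (𝓞 K)) (hJ : J ≠ ⊥) :
    ((d ∣ Ideal.absNorm J) →
      (ArithmeticFunction.moebius d : ℤ) *
          (∑ᶠ (I : Ideal (𝓞 K))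
            (_ : I ≠ ⊥ ∧ I ∣ (J ⊔ Ideal.span {(d : 𝓞 K)}) ∧ d ∣ Ideal.absNorm I), muK I)
        = 1) ∧
    (¬ (d ∣ Ideal.absNorm J) →
      (ArithmeticFunction.moebius d : ℤ) *
          (∑ᶠ (I : Ideal (𝓞 K))
            (_ : I ≠ ⊥ ∧ I ∣ (J ⊔ Ideal.span {(d : 𝓞 K)}) ∧ d ∣ Ideal.absNorm I), muK I)
        = 0) :=
  statement9_general K d hsq J
end
end
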